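/- There exists a constant c > 0 such that for every n ≥ 4 there exists a finite family S of at most n axis-parallel closed squares contained in the unit square U = [0,1]², with pairwise disjoint interiors, whose side lengths s₁,…,s_m satisfy ∑ᵢ sᵢ ≥ c · (1 + esc(S)) · (log n)/(log log n), where esc(S) = ∑ᵢ inf{dist(x,y) : x ∈ Sᵢ, y ∈ frontier U} is the total distance of the squares from the boundary of U. (The explicit square-packing construction in Section 5 proving the lower bound of Theorem 3 for squares.) -/
import Mathlib


open MeasureTheory Metric Set

/-- The axis-parallel closed square `[a, a+s] × [b, b+s] ⊆ ℝ²`. -/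
def axisSquare (a b s : ℝ) : Set (EuclideanSpace ℝ (Fin 2)) :=
  {p | p 0 ∈ Set.Icc a (a + s) ∧ p 1 ∈ Set.Icc b (b + s)}

/-- The unit square `[0,1]² ⊆ ℝ²`. -/
def unitSquare : Set (EuclideanSpace ℝ (Fin 2)) := axisSquare 0 0 1

/-- The infimum distance between two sets in ℝ². -/
noncomputable def escDist (K L : Set (EuclideanSpace ℝ (Fin 2))) : ℝ :=
  sInf (Set.image2 dist K L)

noncomputable def pt (x y : ℝ) : EuclideanSpace ℝ (Fin 2) :=
  (WithLp.equiv 2 _).symm ![x, y]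

@[simp] lemma pt_zero (x y : ℝ) : pt x y 0 = x := rfl
@[simp] lemma pt_one (x y : ℝ) : pt x y 1 = y := rfl

lemma isClosed_axisSquare (a b s : ℝ) : IsClosed (axisSquare a b s) := by
  have h0 : Continuous fun p : EuclideanSpace ℝ (Fin 2) => p 0 :=
    (EuclideanSpace.proj (0 : Fin 2)).continuous
  have h1 : Continuous fun p : EuclideanSpace ℝ (Fin 2) => p 1 :=
    (EuclideanSpace.proj (1 : Fin 2)).continuous
  exact (isClosed_Icc.preimage h0).inter (isClosed_Icc.preimage h1)

lemma mem_interior_axisSquare {a b s : ℝ} {p : EuclideanSpace ℝ (Fin 2)}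
    (hp : p ∈ interior (axisSquare a b s)) :
    a < p 0 ∧ p 0 < a + s ∧ b < p 1 ∧ p 1 < b + s := by
  rw [mem_interior_iff_mem_nhds, Metric.mem_nhds_iff] at hp
  obtain ⟨ε, hε, hball⟩ := hp
  have key : ∀ i : Fin 2, ∀ c : ℝ, |c| < ε →
      (p + c • EuclideanSpace.single i (1:ℝ)) ∈ axisSquare a b s := by
    intro i c hc
    apply hball
    rw [mem_ball, dist_eq_norm, add_sub_cancel_left, norm_smul,
      EuclideanSpace.norm_single, norm_one, mul_one, Real.norm_eq_abs]
    exact hc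
  have happly : ∀ (i j : Fin 2) (c : ℝ),
      (p + c • EuclideanSpace.single i (1:ℝ)) j = p j + c * (if j = i then 1 else 0) := by
    intro i j c
    simp [EuclideanSpace.single_apply, PiLp.add_apply, PiLp.smul_apply, smul_eq_mul]
  have hε2 : |ε/2| < ε := by rw [abs_of_pos (by linarith)]; linarith
  have hε2' : |-(ε/2)| < ε := by rw [abs_neg, abs_of_pos (by linarith)]; linarith
  have A := key 0 (ε/2) hε2
  have B := key 0 (-(ε/2)) hε2'
  have C := key 1 (ε/2) hε2
  have D := key 1 (-(ε/2)) hε2'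
  rw [axisSquare, Set.mem_setOf_eq] at A B C D
  rw [happly, happly] at A B C D
  simp only [Fin.isValue, if_pos rfl, reduceIte, mul_one, mul_zero, add_zero,
    if_neg (by decide : ¬(0:Fin 2) = 1), if_neg (by decide : ¬(1:Fin 2) = 0)] at A B C D
  obtain ⟨⟨A1, A2⟩, _⟩ := A
  obtain ⟨⟨B1, B2⟩, _⟩ := B
  obtain ⟨_, ⟨C1, C2⟩⟩ := C
  obtain ⟨_, ⟨D1, D2⟩⟩ := D
  refine ⟨by linarith, by linarith, by linarith, by linarith⟩

lemma disjoint_interiors {a1 b1 s1 a2 b2 s2 : ℝ}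
    (h : a1 + s1 ≤ a2 ∨ a2 + s2 ≤ a1 ∨ b1 + s1 ≤ b2 ∨ b2 + s2 ≤ b1) :
    Disjoint (interior (axisSquare a1 b1 s1)) (interior (axisSquare a2 b2 s2)) := by
  rw [Set.disjoint_left]
  intro p hp1 hp2
  obtain ⟨q1, q2, q3, q4⟩ := mem_interior_axisSquare hp1
  obtain ⟨r1, r2, r3, r4⟩ := mem_interior_axisSquare hp2
  rcases h with h | h | h | h <;> linarith

lemma axisSquare_subset_unit {a b s : ℝ} (ha : 0 ≤ a) (ha' : a + s ≤ 1)
    (hb : 0 ≤ b) (hb' : b + s ≤ 1) (hs : 0 ≤ s) :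
    axisSquare a b s ⊆ unitSquare := by
  intro p hp
  obtain ⟨⟨p1, p2⟩, p3, p4⟩ := hp
  exact ⟨⟨by linarith, by linarith⟩, by constructor <;> [linarith; linarith]⟩

lemma mem_axisSquare_corner {a b s : ℝ} (hs : 0 ≤ s) : pt a b ∈ axisSquare a b s := by
  refine ⟨⟨?_, ?_⟩, ?_, ?_⟩ <;> simp <;> linarith

lemma pt_mem_frontier {x : ℝ} (hx : 0 ≤ x) (hx' : x ≤ 1) :
    pt x 0 ∈ frontier unitSquare := by
  rw [show unitSquare = axisSquare 0 0 1 from rfl, (isClosed_axisSquare 0 0 1).frontier_eq]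
  constructor
  · exact ⟨⟨by simpa using hx, by simpa using hx'⟩, by simp⟩
  · intro hmem
    obtain ⟨_, _, h3, _⟩ := mem_interior_axisSquare hmem
    simp at h3

lemma dist_pt_vert (x y1 y2 : ℝ) : dist (pt x y1) (pt x y2) = |y1 - y2| := by
  rw [EuclideanSpace.dist_eq]
  rw [Fin.sum_univ_two]
  simp [Real.dist_eq, Real.sqrt_sq_eq_abs]

lemma escDist_le {a b s : ℝ} (hs : 0 ≤ s) (ha : 0 ≤ a) (ha' : a ≤ 1) (hb : 0 ≤ b) :
    escDist (axisSquare a b s) (frontier unitSquare) ≤ b := by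
  have hmem : b ∈ Set.image2 dist (axisSquare a b s) (frontier unitSquare) := by
    refine ⟨pt a b, mem_axisSquare_corner hs, pt a 0, pt_mem_frontier ha ha', ?_⟩
    rw [dist_pt_vert]; rw [abs_of_nonneg (by linarith)]; ring
  exact csInf_le ⟨0, fun d hd => by
    obtain ⟨u, _, v, _, rfl⟩ := hd; exact dist_nonneg⟩ hmem

-- numeric lemmas
lemma exp_four_thirds_lt : Real.exp (4/3) < 4 := by
  have e1 : Real.exp 1 < 2.7182818286 := Real.exp_one_lt_d9
  have h3 : Real.exp (4/3) ^ 3 = Real.exp 4 := by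
    rw [← Real.exp_nat_mul]; norm_num
  have h4 : Real.exp 4 = Real.exp 1 ^ 4 := by
    rw [← Real.exp_nat_mul]; norm_num
  have hpos := Real.exp_pos (4/3)
  have he1pos := Real.exp_pos 1
  have h64 : Real.exp (4/3) ^ 3 < 64 := by
    rw [h3, h4]
    calc Real.exp 1 ^ 4 < 2.7182818286 ^ 4 := by
          exact pow_lt_pow_left₀ e1 he1pos.le (by norm_num)
    _ < 64 := by norm_num
  have : Real.exp (4/3) ^ 3 < 4 ^ 3 := by norm_num; linarith
  exact lt_of_pow_lt_pow_left₀ 3 (by norm_num) this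

lemma exp_quarter_lt : Real.exp (1/4) < 4/3 := by
  have e1 : Real.exp 1 < 2.7182818286 := Real.exp_one_lt_d9
  have h4 : Real.exp (1/4) ^ 4 = Real.exp 1 := by
    rw [← Real.exp_nat_mul]; norm_num
  have hpos := Real.exp_pos (1/4)
  have : Real.exp (1/4) ^ 4 < (4/3) ^ 4 := by rw [h4]; norm_num; linarith
  exact lt_of_pow_lt_pow_left₀ 4 (by norm_num) this

lemma exp_half_lt : Real.exp (1/2) < 2 := by
  have e1 : Real.exp 1 < 2.7182818286 := Real.exp_one_lt_d9
  have h2 : Real.exp (1/2) ^ 2 = Real.exp 1 := by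
    rw [← Real.exp_nat_mul]; norm_num
  have hpos := Real.exp_pos (1/2)
  have : Real.exp (1/2) ^ 2 < 2 ^ 2 := by rw [h2]; norm_num; linarith
  exact lt_of_pow_lt_pow_left₀ 2 (by norm_num) this

lemma sum_pow_aux (k : ℕ) (hk : 2 ≤ k) : ∀ K : ℕ, ∑ j ∈ Finset.range K, k^(j+1) ≤ 2 * k^K := by
  intro K
  induction K with
  | zero => simp
  | succ K ih =>
    rw [Finset.sum_range_succ]
    have : 2 * k ^ K ≤ k ^ (K+1) := by
      rw [pow_succ, mul_comm (k^K) k]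
      exact Nat.mul_le_mul_right (k^K) hk
    calc ∑ j ∈ Finset.range K, k^(j+1) + k^(K+1) ≤ 2*k^K + k^(K+1) := by omega
    _ ≤ 2 * k^(K+1) := by omega

lemma sum_pow_le (k : ℕ) (hk : 2 ≤ k) : ∑ j : Fin k, k^(k - j.val) ≤ 2 * k^k := by
  rw [Fin.sum_univ_eq_sum_range (fun j => k^(k-j))]
  have := Finset.sum_range_reflect (fun j => k^(j+1)) k
  have h2 : ∑ j ∈ Finset.range k, k^(k-j) = ∑ j ∈ Finset.range k, k^(j+1) := by
    rw [← Finset.sum_range_reflect (fun j => k^(j+1)) k]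
    apply Finset.sum_congr rfl
    intro j hj
    simp only [Finset.mem_range] at hj
    congr 1
    omega
  rw [h2]
  exact sum_pow_aux k hk k

section Construction

variable (k : ℕ)

noncomputable def rowS (j : Fin k) : ℝ := (k:ℝ)^(j.val) / (k:ℝ)^k
noncomputable def rowH (j : Fin k) : ℝ := rowS k j / ((k:ℝ) - 1)
def colN (j : Fin k) : ℕ := k^(k - j.val)

variable {k} (hk : 2 ≤ k)
include hk

lemma hK0 : (0:ℝ) < (k:ℝ) := by exact_mod_cast Nat.lt_of_lt_of_le (by norm_num) hk
lemma hK1 : (1:ℝ) ≤ (k:ℝ) := by exact_mod_cast Nat.le_of_lt (Nat.lt_of_lt_of_le (by norm_num) hk)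
lemma hK2 : (2:ℝ) ≤ (k:ℝ) := by exact_mod_cast hk

lemma rowS_pos (j : Fin k) : 0 < rowS k j := by
  have := hK0 hk; unfold rowS; positivity

lemma rowNS (j : Fin k) : (colN k j : ℝ) * rowS k j = 1 := by
  have h0 := hK0 hk
  unfold colN rowS
  push_cast
  rw [mul_div_assoc']
  rw [div_eq_one_iff_eq (by positivity)]
  rw [← pow_add]
  congr 1
  omega

lemma rowS_le (j : Fin k) : rowS k j ≤ 1 / (k:ℝ) := by
  have h0 := hK0 hk
  unfold rowS
  rw [div_le_div_iff₀ (by positivity) h0]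
  calc (k:ℝ)^j.val * k = (k:ℝ)^(j.val+1) := (pow_succ _ _).symm
    _ ≤ (k:ℝ)^k := pow_le_pow_right₀ (hK1 hk) (by omega)
    _ = 1 * (k:ℝ)^k := (one_mul _).symm

lemma rowH_nonneg (j : Fin k) : 0 ≤ rowH k j :=
  div_nonneg (rowS_pos hk j).le (by linarith [hK2 hk])

lemma rowNH (j : Fin k) : (colN k j : ℝ) * rowH k j = 1 / ((k:ℝ) - 1) := by
  unfold rowH
  rw [← mul_div_assoc, rowNS hk]

lemma rowTop (j : Fin k) : rowH k j + rowS k j ≤ 1 := by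
  have h2 := hK2 hk
  have h0 := hK0 hk
  have hs := rowS_pos hk j
  have hle := rowS_le hk j
  have h1 : rowS k j * k ≤ (1/(k:ℝ)) * k := mul_le_mul_of_nonneg_right hle h0.le
  have h1' : (1/(k:ℝ)) * k = 1 := by field_simp
  unfold rowH
  rw [div_add' _ _ _ (by linarith), div_le_one (by linarith)]
  nlinarith

lemma rowRow {j j' : Fin k} (h : j.val < j'.val) :
    rowH k j + rowS k j ≤ rowH k j' := by
  have h2 := hK2 hk
  have h0 := hK0 hk
  have hQ : (0:ℝ) < (k:ℝ)^k := by positivity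
  have hQc : (0:ℝ) < (k:ℝ)^k * ((k:ℝ)-1) := by nlinarith
  have hpow : (k:ℝ)^(j.val) * k ≤ (k:ℝ)^(j'.val) := by
    rw [← pow_succ]; exact pow_le_pow_right₀ (hK1 hk) (by omega)
  have key : rowH k j + rowS k j = ((k:ℝ)^(j.val) * k) / ((k:ℝ)^k * ((k:ℝ) - 1)) := by
    unfold rowH rowS
    rw [div_div, div_add_div _ _ (ne_of_gt hQc) (ne_of_gt hQ),
      div_eq_div_iff (by positivity) (ne_of_gt hQc)]
    ring
  have key2 : rowH k j' = (k:ℝ)^(j'.val) / ((k:ℝ)^k * ((k:ℝ) - 1)) := by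
    unfold rowH rowS
    rw [div_div]
  rw [key, key2]
  exact div_le_div_of_nonneg_right hpow hQc.le

end Construction

lemma packing_exists {k : ℕ} (hk : 2 ≤ k) :
    ∃ (a b s : Fin (∑ j : Fin k, colN k j) → ℝ),
      (∀ i, 0 < s i) ∧
      (∀ i, axisSquare (a i) (b i) (s i) ⊆ unitSquare) ∧
      (∀ i j, i ≠ j →
        Disjoint (interior (axisSquare (a i) (b i) (s i)))
                 (interior (axisSquare (a j) (b j) (s j)))) ∧
      (∑ i, s i = (k:ℝ)) ∧
      (∑ i, escDist (axisSquare (a i) (b i) (s i)) (frontier unitSquare) ≤ 2) := by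
  have h0 := hK0 hk
  have h1 := hK1 hk
  have h2 := hK2 hk
  have hcard : Fintype.card (Σ j : Fin k, Fin (colN k j)) = ∑ j : Fin k, colN k j := by
    simp [Fintype.card_sigma]
  let e := Fintype.equivFinOfCardEq hcard
  refine ⟨fun i => ((e.symm i).2.val : ℝ) * rowS k (e.symm i).1,
          fun i => rowH k (e.symm i).1,
          fun i => rowS k (e.symm i).1, ?_, ?_, ?_, ?_, ?_⟩
  · exact fun i => rowS_pos hk _
  · intro i
    set x := e.symm i with hx
    have hS := rowS_pos hk x.1
    have hlt : (x.2.val : ℝ) + 1 ≤ (colN k x.1 : ℝ) := by exact_mod_cast x.2.isLt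
    have ha' : (x.2.val : ℝ) * rowS k x.1 + rowS k x.1 ≤ 1 := by
      calc (x.2.val : ℝ) * rowS k x.1 + rowS k x.1
          = ((x.2.val : ℝ) + 1) * rowS k x.1 := by ring
        _ ≤ (colN k x.1 : ℝ) * rowS k x.1 := mul_le_mul_of_nonneg_right hlt hS.le
        _ = 1 := rowNS hk _
    exact axisSquare_subset_unit (by positivity) ha' (rowH_nonneg hk _) (rowTop hk _) hS.le
  · intro i j hij
    have hxy : e.symm i ≠ e.symm j := fun hcontra => hij (by
      have := congrArg e hcontra
      simpa using this)
    have main : ∀ x y : Σ j : Fin k, Fin (colN k j), x ≠ y →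
        Disjoint (interior (axisSquare ((x.2.val:ℝ) * rowS k x.1) (rowH k x.1) (rowS k x.1)))
                 (interior (axisSquare ((y.2.val:ℝ) * rowS k y.1) (rowH k y.1) (rowS k y.1))) := by
      rintro ⟨j1, i1⟩ ⟨j2, i2⟩ hxy
      apply disjoint_interiors
      rcases lt_trichotomy j1.val j2.val with h | h | h
      · exact Or.inr (Or.inr (Or.inl (rowRow hk h)))
      · have hjj : j1 = j2 := Fin.ext h
        subst hjj
        have hii : i1 ≠ i2 := by simpa using hxy
        have hS := rowS_pos hk j1
        rcases lt_trichotomy i1.val i2.val with h2' | h2' | h2'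
        · left
          have : (i1.val : ℝ) + 1 ≤ (i2.val : ℝ) := by exact_mod_cast h2'
          nlinarith
        · exact absurd (Fin.ext h2') hii
        · right; left
          have : (i2.val : ℝ) + 1 ≤ (i1.val : ℝ) := by exact_mod_cast h2'
          nlinarith
      · exact Or.inr (Or.inr (Or.inr (rowRow hk h)))
    exact main _ _ hxy
  · rw [Equiv.sum_comp e.symm (fun x : Σ j : Fin k, Fin (colN k j) => rowS k x.1)]
    rw [← Finset.univ_sigma_univ, Finset.sum_sigma]
    have : ∀ j : Fin k, ∑ _i : Fin (colN k j), rowS k j = (colN k j : ℝ) * rowS k j := by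
      intro j
      rw [Finset.sum_const, Finset.card_univ, Fintype.card_fin, nsmul_eq_mul]
    calc ∑ j : Fin k, ∑ _i : Fin (colN k j), rowS k j
        = ∑ j : Fin k, (1:ℝ) := by
          apply Finset.sum_congr rfl
          intro j _
          rw [this j, rowNS hk]
      _ = (k:ℝ) := by simp
  · have hbound : ∀ i, escDist
        (axisSquare (((e.symm i).2.val : ℝ) * rowS k (e.symm i).1)
          (rowH k (e.symm i).1) (rowS k (e.symm i).1)) (frontier unitSquare)
        ≤ rowH k (e.symm i).1 := by
      intro i
      set x := e.symm i with hx
      have hS := rowS_pos hk x.1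
      have hlt : (x.2.val : ℝ) + 1 ≤ (colN k x.1 : ℝ) := by exact_mod_cast x.2.isLt
      have ha1 : (x.2.val : ℝ) * rowS k x.1 ≤ 1 := by
        calc (x.2.val : ℝ) * rowS k x.1 ≤ ((x.2.val : ℝ) + 1) * rowS k x.1 := by nlinarith
          _ ≤ (colN k x.1 : ℝ) * rowS k x.1 := mul_le_mul_of_nonneg_right hlt hS.le
          _ = 1 := rowNS hk _
      exact escDist_le hS.le (by positivity) ha1 (rowH_nonneg hk _)
    calc ∑ i, escDist _ (frontier unitSquare)
        ≤ ∑ i, rowH k (e.symm i).1 := Finset.sum_le_sum (fun i _ => hbound i)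
      _ = ∑ x : Σ j : Fin k, Fin (colN k j), rowH k x.1 :=
          Equiv.sum_comp e.symm (fun x : Σ j : Fin k, Fin (colN k j) => rowH k x.1)
      _ = ∑ j : Fin k, ∑ _i : Fin (colN k j), rowH k j := by
          rw [← Finset.univ_sigma_univ, Finset.sum_sigma]
      _ = ∑ j : Fin k, 1 / ((k:ℝ) - 1) := by
          apply Finset.sum_congr rfl
          intro j _
          rw [Finset.sum_const, Finset.card_univ, Fintype.card_fin, nsmul_eq_mul, rowNH hk]
      _ = (k:ℝ) / ((k:ℝ) - 1) := by
          rw [Finset.sum_const, Finset.card_univ, Fintype.card_fin, nsmul_eq_mul]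
          ring
      _ ≤ 2 := by
          rw [div_le_iff₀ (by linarith)]
          linarith


/-- There is `c > 0` such that for every `n ≥ 4` there is a packing of
`m ≤ n` axis-parallel squares in the unit square whose side lengths satisfy
`∑ sᵢ ≥ c · (1 + esc(S)) · log n / log log n`, where `esc(S)` is the total distance of
the squares from the frontier of the unit square. -/
theorem exists_square_packing_escape_loglog_lower :
    ∃ c : ℝ, 0 < c ∧ ∀ n : ℕ, 4 ≤ n →
      ∃ (m : ℕ), m ≤ n ∧
        ∃ (a b s : Fin m → ℝ),
          (∀ i, 0 < s i) ∧
          (∀ i, axisSquare (a i) (b i) (s i) ⊆ unitSquare) ∧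
          (∀ i j, i ≠ j →
            Disjoint (interior (axisSquare (a i) (b i) (s i)))
                     (interior (axisSquare (a j) (b j) (s j)))) ∧
          c * (1 + ∑ i, escDist (axisSquare (a i) (b i) (s i)) (frontier unitSquare)) *
              (Real.log n / Real.log (Real.log n)) ≤ ∑ i, s i := by
  refine ⟨1/100, by norm_num, ?_⟩
  intro n hn
  set L := Real.log n with hLdef
  set LL := Real.log L with hLLdef
  have hn4 : (4:ℝ) ≤ (n:ℝ) := by exact_mod_cast hn
  have hn0 : (0:ℝ) < (n:ℝ) := by linarith
  have hlog4 : (4:ℝ)/3 < Real.log 4 :=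
    (Real.lt_log_iff_exp_lt (by norm_num)).2 exp_four_thirds_lt
  have hL43 : (4:ℝ)/3 < L :=
    lt_of_lt_of_le hlog4 (Real.log_le_log (by norm_num) hn4)
  have hL1 : (1:ℝ) < L := by linarith
  have hLL0 : 0 < LL := Real.log_pos hL1
  have hLL14 : (1:ℝ)/4 < LL :=
    lt_of_lt_of_le ((Real.lt_log_iff_exp_lt (by norm_num)).2 exp_quarter_lt)
      (Real.log_le_log (by norm_num) hL43.le)
  have ht0 : 0 < L / LL := div_pos (by linarith) hLL0
  by_cases hcase : L / LL ≤ 100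
  · -- Case A : a single unit square
    refine ⟨1, by omega, fun _ => 0, fun _ => 0, fun _ => 1, fun _ => one_pos,
      fun _ => by show axisSquare 0 0 1 ⊆ unitSquare; exact subset_rfl, fun i j hij => absurd (Subsingleton.elim i j) hij, ?_⟩
    have hesc : escDist (axisSquare 0 0 1) (frontier unitSquare) ≤ 0 :=
      escDist_le (by norm_num) le_rfl (by norm_num) le_rfl
    rw [Fin.sum_univ_one, Fin.sum_univ_one]
    nlinarith [mul_nonpos_of_nonpos_of_nonneg hesc ht0.le]
  · push_neg at hcase
    set k := Nat.floor (L / LL / 2) with hkdef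
    have hk50 : 50 ≤ k := Nat.le_floor (by push_cast; linarith)
    have hk2 : 2 ≤ k := by omega
    have hK2 : (2:ℝ) ≤ (k:ℝ) := by exact_mod_cast hk2
    have hKt : (k:ℝ) ≤ L / LL / 2 := Nat.floor_le (by positivity)
    have hKt' : L / LL / 2 < (k:ℝ) + 1 := Nat.lt_floor_add_one _
    have hLt : L = (L / LL) * LL := by field_simp
    have hL25 : 25 < L := by nlinarith
    have hLLhalf : 1/2 < LL := by
      have hexpL : Real.exp (1/2) < L := by linarith [exp_half_lt]
      exact (Real.lt_log_iff_exp_lt (by linarith)).2 hexpL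
    have hKL : (k:ℝ) ≤ L := by nlinarith
    have hlogK0 : 0 ≤ Real.log (k:ℝ) := Real.log_nonneg (by linarith)
    have hlogK : Real.log (k:ℝ) ≤ LL := Real.log_le_log (by linarith) hKL
    have hklogk : (k:ℝ) * Real.log (k:ℝ) ≤ L / 2 := by
      have hmul : (k:ℝ) * Real.log (k:ℝ) ≤ (L / LL / 2) * LL :=
        mul_le_mul hKt hlogK hlogK0 (by positivity)
      have : (L / LL / 2) * LL = L / 2 := by field_simp
      linarith [hmul, this.le]
    have hexpk : (k:ℝ)^k ≤ Real.exp (L/2) := by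
      have hkk : (k:ℝ)^k = Real.exp ((k:ℕ) * Real.log (k:ℝ)) := by
        rw [← Real.log_pow, Real.exp_log (by positivity)]
      rw [hkk]
      apply Real.exp_le_exp.2
      exact_mod_cast hklogk
    have hexp2 : (2:ℝ) ≤ Real.exp (L/2) := by
      have h12 : (1:ℝ) ≤ L/2 := by linarith
      calc (2:ℝ) ≤ Real.exp 1 := by linarith [Real.add_one_le_exp 1]
        _ ≤ Real.exp (L/2) := Real.exp_le_exp.2 h12
    have hne : 2 * (k:ℝ)^k ≤ (n:ℝ) := by
      have hexpL : Real.exp L = (n:ℝ) := Real.exp_log hn0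
      calc 2 * (k:ℝ)^k ≤ Real.exp (L/2) * Real.exp (L/2) :=
            mul_le_mul hexp2 hexpk (by positivity) (by positivity)
        _ = Real.exp L := by rw [← Real.exp_add]; ring_nf
        _ = (n:ℝ) := hexpL
    have hmn : 2 * k^k ≤ n := by exact_mod_cast (by push_cast; exact hne : ((2 * k^k : ℕ):ℝ) ≤ (n:ℝ))
    have hmle : (∑ j : Fin k, colN k j) ≤ n := le_trans (by
      have := sum_pow_le k hk2
      simpa [colN] using this) hmn
    obtain ⟨a, b, s, hpos, hsub, hdisj, hsum, hesc⟩ := packing_exists hk2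
    refine ⟨∑ j : Fin k, colN k j, hmle, a, b, s, hpos, hsub, hdisj, ?_⟩
    rw [hsum]
    nlinarith [mul_nonneg (by linarith : (0:ℝ) ≤ 2 - ∑ i, escDist (axisSquare (a i) (b i) (s i)) (frontier unitSquare)) ht0.le]
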